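/- For every monic irreducible polynomial f of degree mn over F_q, the number of mn×mn matrices T over F_q that are (m,n)-block companion and have characteristic polynomial f equals N(α,m,n;q)/(q^{mn}-1), where α is any root of f in F_{q^{mn}} and N(α,m,n;q) is the number of ordered bases of F_{q^{mn}} of the form (v_1,...,v_m, αv_1,...,αv_m, ..., α^{n-1}v_1,...,α^{n-1}v_m). -/

import Mathlib

open Polynomial

/-- An (m,n)-block companion matrix: identity blocks on the block subdiagonal,
arbitrary m×m blocks in the last block column, zeros elsewhere. -/
def IsBlockCompanion {F : Type*} [Field F] {m n : ℕ}
    (T : Matrix (Fin n × Fin m) (Fin n × Fin m) F) : Prop :=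
  ∃ C : Fin n → Matrix (Fin m) (Fin m) F,
    ∀ (i j : Fin n) (a b : Fin m),
      T (i, a) (j, b) =
        if (j : ℕ) = n - 1 then C i a b
        else if (i : ℕ) = (j : ℕ) + 1 then (if a = b then 1 else 0) else 0

/-!
For a basis `b` of `K` over `F`, the matrix of multiplication by `α` is block companion exactly
when `b` has the shape `(αⁱ v_a)`, and its characteristic polynomial is always `f = minpoly F α`.
Every matrix `T` with characteristic polynomial `f` arises: `f(T) = 0` lets `K = F[α]` act on
`F^{mn}` with `α` acting as `T`, and for `w ≠ 0` the orbit map `k ↦ k • w` is injective, hence an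
`F`-linear isomorphism intertwining `α` and `T`. Two bases give the same matrix iff they
differ by a scalar of `Kˣ`, because an `F`-linear map commuting with `α` commutes with all of
`F[α] = K`. Hence `Kˣ` acts freely on the bases of that shape with the block companion matrices
with characteristic polynomial `f` as orbits, and `|Kˣ| = q^{mn} - 1`.
-/

theorem card_subtype_comp_eq_card_mul {G X Y : Type*} [Group G] [MulAction G X] (π : X → Y)
    (P : Y → Prop) (hsurj : ∀ y, P y → ∃ x, π x = y)
    (hfib : ∀ x x' : X, π x = π x' ↔ ∃ g : G, g • x = x')
    (hfree : ∀ (g : G) (x : X), g • x = x → g = 1) :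
    Nat.card {x // P (π x)} = Nat.card G * Nat.card {y // P y} := by
  choose s hs using hsurj
  have hπ : ∀ (g : G) x, π (g • x) = π x := fun g x => ((hfib x _).2 ⟨g, rfl⟩).symm
  rw [← Nat.card_prod]
  refine (Nat.card_eq_of_bijective
    (fun gy : G × {y // P y} => ⟨gy.1 • s gy.2 gy.2.2, by rw [hπ, hs]; exact gy.2.2⟩)
    ⟨?_, fun x => ?_⟩).symm
  · rintro ⟨g, y, hy⟩ ⟨g', y', hy'⟩ h
    have hval : g • s y hy = g' • s y' hy' := congrArg Subtype.val h
    obtain rfl : y = y' := by simpa only [hπ, hs] using congrArg π hval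
    have : (g'⁻¹ * g) • s y hy = s y hy := by rw [mul_smul, hval, inv_smul_smul]
    rw [inv_mul_eq_one.1 (hfree _ _ this)]
  · obtain ⟨g, hg⟩ := (hfib (s (π x.1) x.2) x.1).1 (hs _ _)
    exact ⟨(g, ⟨π x.1, x.2⟩), Subtype.ext hg⟩

section BlockCompanion

variable {F M : Type*} [Field F] [AddCommGroup M] [Module F M] {m n : ℕ}

theorem isBlockCompanion_iff (T : Matrix (Fin n × Fin m) (Fin n × Fin m) F) :
    IsBlockCompanion T ↔ ∀ (i j : Fin n) (a : Fin m), (j : ℕ) = i + 1 →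
      (fun p => T p (i, a)) = Pi.single (j, a) 1 := by
  constructor
  · rintro ⟨C, hC⟩ i j a hij
    funext ⟨k, c⟩
    rw [hC, if_neg (by omega)]
    simp only [Pi.single_apply, Prod.mk.injEq, Fin.ext_iff, hij, eq_comm (a := c), ite_and]
  · intro h
    refine ⟨fun i a b => T (i, a) (⟨n - 1, by have := i.isLt; omega⟩, b), fun i j a b => ?_⟩
    by_cases hj : (j : ℕ) = n - 1
    · rw [if_pos hj]
      congr
      exact Fin.ext hj
    · have hj' : (j : ℕ) + 1 < n := by omega
      rw [if_neg hj, congrFun (h j ⟨j + 1, hj'⟩ b rfl) (i, a)]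
      simp only [Pi.single_apply, Prod.mk.injEq, Fin.ext_iff, ite_and]

theorem isBlockCompanion_toMatrix_iff (b : Module.Basis (Fin n × Fin m) F M) (L : M →ₗ[F] M) :
    IsBlockCompanion (LinearMap.toMatrix b b L) ↔
      ∀ (i j : Fin n) (a : Fin m), (j : ℕ) = i + 1 → L (b (i, a)) = b (j, a) := by
  simp only [isBlockCompanion_iff, LinearMap.toMatrix_apply, ← Finsupp.single_eq_pi_single,
    ← b.repr_self]
  refine forall₄_congr fun i j a _ => ?_
  exact ⟨fun h => b.repr.injective (DFunLike.coe_injective h), fun h => by rw [h]⟩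

end BlockCompanion

section Extension

open Module LinearMap

variable {F K : Type*} [Field F] [Field K] [Algebra F K]

theorem isBlockCompanion_toMatrix_lmul_iff {m n : ℕ} (hn : 0 < n) (α : K)
    (b : Basis (Fin n × Fin m) F K) :
    IsBlockCompanion (toMatrix b b (Algebra.lmul F K α)) ↔
      ∃ v : Fin m → K, ∀ p, b p = α ^ (p.1 : ℕ) * v p.2 := by
  rw [isBlockCompanion_toMatrix_iff]
  constructor
  · intro h
    refine ⟨fun a => b (⟨0, hn⟩, a), fun ⟨⟨i, hi⟩, a⟩ => ?_⟩
    induction i with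
    | zero => simp
    | succ i ih =>
      rw [← h ⟨i, by omega⟩ ⟨i + 1, hi⟩ a rfl, Algebra.coe_lmul_eq_mul, mul_apply',
        ih (by omega), pow_succ', mul_assoc]
  · rintro ⟨v, hv⟩ i j a hij
    rw [Algebra.coe_lmul_eq_mul, mul_apply', hv, hv, hij, pow_succ', mul_assoc]

theorem card_basis_pow_mul_eq_card_tuple {m n : ℕ} (hn : 0 < n) (α : K) :
    Nat.card {b : Basis (Fin n × Fin m) F K //
        ∃ v : Fin m → K, ∀ p, b p = α ^ (p.1 : ℕ) * v p.2} =
      Nat.card {v : Fin m → K //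
        ∃ b : Basis (Fin n × Fin m) F K, ∀ p, b p = α ^ (p.1 : ℕ) * v p.2} := by
  have hv : ∀ (b : Basis (Fin n × Fin m) F K) v, (∀ p, b p = α ^ (p.1 : ℕ) * v p.2) →
      v = fun a => b (⟨0, hn⟩, a) := fun b v h => funext fun a => by simp [h]
  refine Nat.card_eq_of_bijective
    (fun b => ⟨fun a => b.1 (⟨0, hn⟩, a), b.1, by obtain ⟨v, h⟩ := b.2; exact hv _ _ h ▸ h⟩)
    ⟨fun b b' hbb' => ?_, fun v => ⟨⟨v.2.choose, v.1, v.2.choose_spec⟩, ?_⟩⟩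
  · obtain ⟨v, h⟩ := b.2
    obtain ⟨v', h'⟩ := b'.2
    obtain rfl := (hv _ _ h).trans (congrArg Subtype.val hbb') |>.trans (hv _ _ h').symm
    exact Subtype.ext (Basis.eq_of_apply_eq fun p => by rw [h, h'])
  · exact Subtype.ext (hv _ _ v.2.choose_spec).symm

theorem Module.Basis.eq_one_of_units_smul_eq_self {ι : Type*} [Nonempty ι] {c : Kˣ}
    {b : Basis ι F K} (h : c • b = b) : c = 1 := by
  obtain ⟨i⟩ := ‹Nonempty ι›
  have hi : (c : K) * b i = b i := congrArg (· i) h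
  exact Units.ext ((mul_eq_right₀ (b.ne_zero i)).1 hi)

theorem toMatrix_units_smul_lmul {ι : Type*} [Fintype ι] [DecidableEq ι] (c : Kˣ)
    (b : Basis ι F K) (α : K) :
    toMatrix (c • b) (c • b) (Algebra.lmul F K α) = toMatrix b b (Algebra.lmul F K α) := by
  rw [toMatrix_smulBasis_left, toMatrix_smulBasis_right]
  congr 1
  ext x
  simp [Units.smul_def, mul_left_comm α]

end Extension

namespace PowerBasis

open Module LinearMap

variable {F K : Type*} [Field F] [Field K] [Algebra F K] (pb : PowerBasis F K)
variable {ι : Type*} [Fintype ι] [DecidableEq ι]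

theorem charpoly_toMatrix_lmul_gen (b : Basis ι F K) :
    (toMatrix b b (Algebra.lmul F K pb.gen)).charpoly = minpoly F pb.gen := by
  have := pb.finite
  rw [charpoly_toMatrix, ← charpoly_toMatrix _ pb.basis, ← Algebra.leftMulMatrix_apply,
    charpoly_leftMulMatrix]

theorem exists_linearEquiv_mul_gen {M : Type*} [AddCommGroup M] [Module F M]
    [FiniteDimensional F M] (L : End F M) (hL : aeval L (minpoly F pb.gen) = 0)
    (hdim : Module.finrank F M = pb.dim) : ∃ Φ : K ≃ₗ[F] M, ∀ k, Φ (pb.gen * k) = L (Φ k) := by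
  let ψ := pb.lift L hL
  have : Nontrivial M := Module.nontrivial_of_finrank_pos (hdim ▸ pb.dim_pos)
  obtain ⟨w, hw⟩ := exists_ne (0 : M)
  let Φ : K →ₗ[F] M := applyₗ w ∘ₗ ψ.toLinearMap
  have hΦ : ∀ k, Φ k = ψ k w := fun k => rfl
  have hinj : Function.Injective Φ := by
    refine (injective_iff_map_eq_zero Φ).2 fun k hk => by_contra fun hk0 => hw ?_
    calc w = ψ (k⁻¹ * k) w := by rw [inv_mul_cancel₀ hk0, map_one, Module.End.one_apply]
      _ = 0 := by rw [map_mul, Module.End.mul_apply, ← hΦ, hk, map_zero]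
  have : FiniteDimensional F K := pb.finite
  refine ⟨Φ.linearEquivOfInjective hinj (by rw [pb.finrank, hdim]), fun k => ?_⟩
  simp only [linearEquivOfInjective_apply, hΦ, map_mul, Module.End.mul_apply, ψ, lift_gen]

theorem exists_basis_toMatrix_lmul_gen_eq (T : Matrix ι ι F)
    (hT : aeval T (minpoly F pb.gen) = 0) (hcard : Fintype.card ι = pb.dim) :
    ∃ b : Basis ι F K, toMatrix b b (Algebra.lmul F K pb.gen) = T := by
  obtain ⟨Φ, hΦ⟩ := pb.exists_linearEquiv_mul_gen (Matrix.toLin' T)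
    ((aeval_algHom_apply Matrix.toLinAlgEquiv' T _).trans (by rw [hT, map_zero]))
    (by rw [Module.finrank_fintype_fun_eq_card, hcard])
  refine ⟨(Pi.basisFun F ι).map Φ.symm, ?_⟩
  have hconj :
      Φ.toLinearMap ∘ₗ Algebra.lmul F K pb.gen ∘ₗ Φ.symm.toLinearMap = Matrix.toLin' T := by
    refine LinearMap.ext fun x => ?_
    simp only [coe_comp, LinearEquiv.coe_coe, Function.comp_apply, Algebra.coe_lmul_eq_mul,
      mul_apply', hΦ, LinearEquiv.apply_symm_apply]
  rw [toMatrix_map_left, toMatrix_map_right, LinearEquiv.symm_symm, hconj,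
    toMatrix_eq_toMatrix', toMatrix'_toLin']

theorem commute_lmul_of_commute_lmul_gen {g : End F K} (h : Commute g (Algebra.lmul F K pb.gen))
    (k : K) : Commute g (Algebra.lmul F K k) := by
  have hle : Algebra.adjoin F {pb.gen} ≤
      (Subalgebra.centralizer F {g}).comap (Algebra.lmul F K) := by
    rw [Algebra.adjoin_le_iff, Set.singleton_subset_iff, SetLike.mem_coe, Subalgebra.mem_comap,
      Subalgebra.mem_centralizer_iff]
    rintro _ rfl
    exact h
  have hk : Algebra.lmul F K k ∈ Subalgebra.centralizer F {g} :=
    hle (pb.adjoin_gen_eq_top ▸ Algebra.mem_top)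
  exact (Subalgebra.mem_centralizer_iff F).1 hk g rfl

theorem exists_units_smul_eq_of_toMatrix_lmul_gen_eq (b b' : Basis ι F K)
    (h : toMatrix b b (Algebra.lmul F K pb.gen) = toMatrix b' b' (Algebra.lmul F K pb.gen)) :
    ∃ c : Kˣ, c • b = b' := by
  let g := b.equiv b' (Equiv.refl ι)
  have hb' : b' = b.map g := by rw [b.map_equiv, Equiv.refl_symm, Basis.reindex_refl]
  have hg : Commute g.toLinearMap (Algebra.lmul F K pb.gen) := by
    rw [hb', toMatrix_map_left, toMatrix_map_right, (toMatrix b b).injective.eq_iff] at h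
    rw [Commute, SemiconjBy, Module.End.mul_eq_comp, Module.End.mul_eq_comp]
    nth_rewrite 1 [h]
    ext x
    simp
  have hmul : ∀ x, g x = g 1 * x := fun x => by
    simpa [mul_comm] using LinearMap.congr_fun (pb.commute_lmul_of_commute_lmul_gen hg x) 1
  refine ⟨Units.mk0 (g 1) (by simp), Basis.eq_of_apply_eq fun i => ?_⟩
  rw [Basis.smul_apply, Units.smul_mk0, smul_eq_mul, ← hmul, hb', Basis.map_apply]

end PowerBasis

/-- For f monic irreducible of degree mn with root α, the number of
(m,n)-block companion matrices with characteristic polynomial f equals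
N(α,m,n;q)/(q^{mn}-1); stated multiplied through by (q^{mn}-1). -/
theorem stmt_19 (F : Type*) [Field F] [Fintype F] (q : ℕ) (hq : q = Fintype.card F)
    (m n : ℕ) (hm : 0 < m) (hn : 0 < n)
    (K : Type*) [Field K] [Algebra F K] [FiniteDimensional F K]
    (hK : Module.finrank F K = m * n)
    (f : Polynomial F) (hf : f.Monic) (hirr : Irreducible f)
    (hdeg : f.natDegree = m * n)
    (α : K) (hα : Polynomial.aeval α f = 0) :
    (q ^ (m * n) - 1) * Nat.card {T : Matrix (Fin n × Fin m) (Fin n × Fin m) F //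
        IsBlockCompanion T ∧ Matrix.charpoly T = f} =
      Nat.card {v : Fin m → K //
        ∃ b : Module.Basis (Fin n × Fin m) F K,
          ∀ p : Fin n × Fin m, b p = α ^ (p.1 : ℕ) * v p.2} := by
  classical
  have : Finite K := Module.finite_of_finite F
  have : Fintype K := Fintype.ofFinite K
  obtain rfl : f = minpoly F α := minpoly.eq_of_irreducible_of_monic hirr hα hf
  have hint := IsIntegral.of_finite F α
  obtain ⟨pb, rfl⟩ : ∃ pb : PowerBasis F K, pb.gen = α :=
    ⟨_, PowerBasis.ofAdjoinEqTop'_gen hint (Algebra.adjoin_eq_top_of_primitive_element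
      hint.isAlgebraic
        ((Field.primitive_element_iff_minpoly_natDegree_eq F _).2 (hdeg.trans hK.symm)))⟩
  have hdim : Fintype.card (Fin n × Fin m) = pb.dim := by rw [← pb.finrank, hK]; simp [mul_comm]
  have hunits : Nat.card Kˣ = q ^ (m * n) - 1 := by
    rw [Nat.card_units, Nat.card_eq_fintype_card, Module.card_eq_pow_finrank (K := F), hK, hq]
  have : Nonempty (Fin n × Fin m) := ⟨(⟨0, hn⟩, ⟨0, hm⟩)⟩
  rw [← hunits, ← card_basis_pow_mul_eq_card_tuple hn, ← card_subtype_comp_eq_card_mul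
    (fun b : Module.Basis _ F K => LinearMap.toMatrix b b (Algebra.lmul F K pb.gen))
    (fun T => IsBlockCompanion T ∧ T.charpoly = minpoly F pb.gen)
    (fun T hT =>
      pb.exists_basis_toMatrix_lmul_gen_eq T (hT.2 ▸ Matrix.aeval_self_charpoly T) hdim)
    (fun b b' => ⟨pb.exists_units_smul_eq_of_toMatrix_lmul_gen_eq b b',
      fun ⟨c, hc⟩ => hc ▸ (toMatrix_units_smul_lmul c b _).symm⟩)
    (fun _ _ => Module.Basis.eq_one_of_units_smul_eq_self)]
  exact Nat.card_congr (Equiv.subtypeEquivRight fun b => by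
    simp only [isBlockCompanion_toMatrix_lmul_iff hn, pb.charpoly_toMatrix_lmul_gen, and_true])
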